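/- Combining the sign-consistency condition with Farkas' lemma: if C is the block-structured matrix built from matrices C_i ∈ ℝ^{(n-1)×3} (so that qᵀC = (q_1ᵀC_1, …, q_nᵀC_n) for block-decomposed q), and every column of every C_i has entries of a single strict sign, then for every right-hand side b the system C u ≤ b admits a solution u. -/
import Mathlib


/-- If every column of every block `Cᵢ ∈ ℝ^{(n-1)×3}` has entries of a single
strict sign, then for every right-hand side `b` the block-structured system
`C u ≤ b` admits a solution, where `C` is the block-diagonal stacking of the `Cᵢ`
(so that `qᵀC = (q₁ᵀC₁, …, qₙᵀCₙ)`). -/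
theorem sign_consistency_implies_feasibility (n : ℕ)
    (Cb : Fin n → Matrix (Fin (n - 1)) (Fin 3) ℝ)
    (hsign : ∀ i, ∀ c : Fin 3, (∀ r, 0 < Cb i r c) ∨ (∀ r, Cb i r c < 0))
    (C : Matrix (Fin n × Fin (n - 1)) (Fin n × Fin 3) ℝ)
    (hC : ∀ i r j c, C (i, r) (j, c) = if i = j then Cb i r c else 0)
    (b : Fin n × Fin (n - 1) → ℝ) :
    ∃ u : Fin n × Fin 3 → ℝ, C.mulVec u ≤ b := by
  classical
  set s : Fin n → Fin 3 → ℝ := fun i c => if (∀ r, 0 < Cb i r c) then 1 else -1 with hs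
  have hprod : ∀ i (r : Fin (n - 1)) c, 0 < Cb i r c * s i c := by
    intro i r c
    by_cases h : ∀ r, 0 < Cb i r c
    · simpa [hs, h] using h r
    · have hneg := (hsign i c).resolve_left h
      have := hneg r
      simp only [hs, h, if_false]
      nlinarith
  have hpos : ∀ i (r : Fin (n - 1)), 0 < ∑ c, Cb i r c * s i c := fun i r =>
    Finset.sum_pos (fun c _ => hprod i r c) Finset.univ_nonempty
  obtain ⟨M, hM⟩ := Finite.exists_le
    (fun p : Fin n × Fin (n - 1) => -b p / (∑ c, Cb p.1 p.2 c * s p.1 c))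
  refine ⟨fun p => -M * s p.1 p.2, ?_⟩
  rintro ⟨i, r⟩
  have key : C.mulVec (fun p => -M * s p.1 p.2) (i, r)
      = -M * ∑ c, Cb i r c * s i c := by
    simp only [Matrix.mulVec, dotProduct, Fintype.sum_prod_type]
    rw [Finset.sum_eq_single i]
    · rw [Finset.mul_sum]
      refine Finset.sum_congr rfl fun c _ => ?_
      rw [hC]
      simp; ring
    · intro j _ hj
      refine Finset.sum_eq_zero fun c _ => ?_
      rw [hC]
      simp [Ne.symm hj]
    · intro h; exact absurd (Finset.mem_univ i) h
  rw [key]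
  have hP := hpos i r
  have h1 : -b (i, r) / (∑ c, Cb i r c * s i c) ≤ M := hM (i, r)
  have h2 : -b (i, r) ≤ M * (∑ c, Cb i r c * s i c) := (div_le_iff₀ hP).mp h1
  linarith
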